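/- arXiv:2306.06387 — 3 statements merged into one kernel-verified Lean document; each statement's English description precedes it below -/
import Mathlib

section
/- Let X be a compact Hausdorff topological space and let A be a set of continuous real-valued functions on X satisfying: (i) A is a ℚ-linear subspace of C(X,ℝ), i.e. closed under pointwise addition and under multiplication by rational scalars; (ii) the constant function 1 belongs to A; (iii) A separates points, i.e. for any two distinct points x, y ∈ X there exists f ∈ A with f(x) ≠ f(y); (iv) A is closed under pointwise minimum, i.e. if f, g ∈ A then the function x ↦ min{f(x), g(x)} belongs to A. Then A is dense in C(X,ℝ) with respect to the uniform (supremum) norm. -/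
/-! The closure of `A` is again closed under addition and minima, and under all real scalars
because `ℚ` is dense in `ℝ`; hence it also contains `max f g = f + g - min f g`, and affine
combinations of `1` and a separating function interpolate any two values at two points.
The lattice version of Stone–Weierstrass (`ContinuousMap.sublattice_closure_eq_top`)
then shows that this closure is everything. -/

theorem sup_mem_of_add_mem_of_neg_mem_of_inf_mem {α : Type*} [Lattice α] [AddCommGroup α]
    [AddLeftMono α] {S : Set α} (hadd : ∀ a ∈ S, ∀ b ∈ S, a + b ∈ S)
    (hneg : ∀ a ∈ S, -a ∈ S) (hinf : ∀ a ∈ S, ∀ b ∈ S, a ⊓ b ∈ S) {a b : α}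
    (ha : a ∈ S) (hb : b ∈ S) : a ⊔ b ∈ S := by
  have hsup : a ⊔ b = a + b + -(a ⊓ b) := by
    rw [← inf_add_sup a b]
    abel
  rw [hsup]
  exact hadd _ (hadd a ha b hb) _ (hneg _ (hinf a ha b hb))

theorem real_smul_mem_closure_of_rat_smul_mem {E : Type*} [TopologicalSpace E] [SMul ℝ E]
    [ContinuousSMul ℝ E] {S : Set E} (hsmul : ∀ q : ℚ, ∀ x ∈ S, (q : ℝ) • x ∈ S) (r : ℝ)
    {x : E} (hx : x ∈ closure S) : r • x ∈ closure S := by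
  have hr : r ∈ closure (Set.range ((↑) : ℚ → ℝ)) := by
    rw [Rat.denseRange_cast.closure_range]
    trivial
  exact map_mem_closure₂ continuous_smul hr hx fun _ ⟨q, hq⟩ y hy => hq ▸ hsmul q y hy

namespace ContinuousMap

variable {X : Type*} [TopologicalSpace X]

theorem dist_inf_inf_le [CompactSpace X] (f g f' g' : C(X, ℝ)) :
    dist (f ⊓ g) (f' ⊓ g') ≤ max (dist f f') (dist g g') := by
  refine (dist_le (le_max_of_le_left dist_nonneg)).2 fun x => ?_
  calc dist ((f ⊓ g) x) ((f' ⊓ g') x) ≤ max (dist (f x) (f' x)) (dist (g x) (g' x)) := by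
        simpa only [Real.dist_eq, inf_apply] using abs_min_sub_min_le_max _ _ _ _
    _ ≤ max (dist f f') (dist g g') := max_le_max (dist_apply_le_dist x) (dist_apply_le_dist x)

instance [CompactSpace X] : ContinuousInf C(X, ℝ) where
  continuous_inf := LipschitzWith.continuous (K := 1) <| LipschitzWith.of_dist_le_mul
    fun p q => by simpa [Prod.dist_eq] using dist_inf_inf_le p.1 p.2 q.1 q.2

theorem separatesPointsStrongly_of_separatesPoints {𝕜 : Type*} [Field 𝕜] [TopologicalSpace 𝕜]
    [IsTopologicalRing 𝕜] {S : Set C(X, 𝕜)} (hadd : ∀ f ∈ S, ∀ g ∈ S, f + g ∈ S)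
    (hsmul : ∀ c : 𝕜, ∀ f ∈ S, c • f ∈ S) (hone : (1 : C(X, 𝕜)) ∈ S)
    (hsep : ∀ x y : X, x ≠ y → ∃ f ∈ S, f x ≠ f y) : S.SeparatesPointsStrongly := by
  intro v x y
  by_cases hxy : x = y
  · exact ⟨v x • 1, hsmul _ _ hone, by simp, by simp [hxy]⟩
  obtain ⟨f, hfS, hfxy⟩ := hsep x y hxy
  have hne : f y - f x ≠ 0 := sub_ne_zero.mpr hfxy.symm
  set c := (v y - v x) / (f y - f x)
  refine ⟨(v x - c * f x) • 1 + c • f, hadd _ (hsmul _ _ hone) _ (hsmul c f hfS), by simp, ?_⟩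
  have hc : c * (f y - f x) = v y - v x := div_mul_cancel₀ _ hne
  simp only [add_apply, smul_apply, one_apply, smul_eq_mul, mul_one]
  linear_combination hc

end ContinuousMap

theorem rational_stone_weierstrass_min_general
    (X : Type*) [TopologicalSpace X] [CompactSpace X]
    (A : Set C(X, ℝ))
    (hadd : ∀ f ∈ A, ∀ g ∈ A, f + g ∈ A)
    (hsmul : ∀ (q : ℚ), ∀ f ∈ A, (q : ℝ) • f ∈ A)
    (hone : (1 : C(X, ℝ)) ∈ A)
    (hsep : ∀ x y : X, x ≠ y → ∃ f ∈ A, f x ≠ f y)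
    (hmin : ∀ f ∈ A, ∀ g ∈ A, f ⊓ g ∈ A) :
    Dense A := by
  have hBadd : ∀ f ∈ closure A, ∀ g ∈ closure A, f + g ∈ closure A :=
    fun f hf g hg => map_mem_closure₂ continuous_add hf hg hadd
  have hBsmul : ∀ r : ℝ, ∀ f ∈ closure A, r • f ∈ closure A :=
    fun r _ hf => real_smul_mem_closure_of_rat_smul_mem hsmul r hf
  have hBinf : ∀ f ∈ closure A, ∀ g ∈ closure A, f ⊓ g ∈ closure A :=
    fun f hf g hg => map_mem_closure₂ continuous_inf hf hg hmin
  have hBsup : ∀ f ∈ closure A, ∀ g ∈ closure A, f ⊔ g ∈ closure A :=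
    fun f hf g hg => sup_mem_of_add_mem_of_neg_mem_of_inf_mem hBadd
      (fun f hf => by simpa using hBsmul (-1) f hf) hBinf hf hg
  have hBsep : (closure A).SeparatesPointsStrongly :=
    ContinuousMap.separatesPointsStrongly_of_separatesPoints hBadd hBsmul (subset_closure hone)
      fun x y hxy => (hsep x y hxy).imp fun f hf => ⟨subset_closure hf.1, hf.2⟩
  have hclosure := ContinuousMap.sublattice_closure_eq_top _ ⟨1, subset_closure hone⟩ hBinf hBsup
    hBsep
  rwa [closure_closure, Set.top_eq_univ, ← dense_iff_closure_eq] at hclosure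

/-- **Rational Stone–Weierstrass for min-closed lattices.**
Let `X` be a compact Hausdorff space and `A ⊆ C(X, ℝ)` a ℚ-linear subspace
(closed under addition and rational scalar multiplication) containing the
constant function `1`, separating points, and closed under pointwise minimum.
Then `A` is dense in `C(X, ℝ)` for the uniform norm. -/
theorem rational_stone_weierstrass_min
    (X : Type*) [TopologicalSpace X] [CompactSpace X] [T2Space X]
    (A : Set C(X, ℝ))
    (hadd : ∀ f ∈ A, ∀ g ∈ A, f + g ∈ A)
    (hsmul : ∀ (q : ℚ), ∀ f ∈ A, (q : ℝ) • f ∈ A)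
    (hone : (1 : C(X, ℝ)) ∈ A)
    (hsep : ∀ x y : X, x ≠ y → ∃ f ∈ A, f x ≠ f y)
    (hmin : ∀ f ∈ A, ∀ g ∈ A, f ⊓ g ∈ A) :
    Dense A :=
  rational_stone_weierstrass_min_general X A hadd hsmul hone hsep hmin
end

section
/- Fix an integer r ≥ 1. Let V be the set of all finite ℚ-linear combinations of the functions f_T, where T ranges over finite nonempty subsets of ℤ_{≥0}^r \ {0}. Then V is closed under pointwise minimum: if f, g ∈ V, then the function m ↦ min{f(m), g(m)} on ℝ_{≥0}^r belongs to V. -/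
/-- The nonnegative orthant `ℝ_{≥0}^r`, as a subtype of `Fin r → ℝ`. -/
def Orthant (r : ℕ) : Type := {m : Fin r → ℝ // ∀ i, 0 ≤ m i}

/-- For a finite nonempty set `T ⊆ ℤ_{≥0}^r` of integer vectors, the function
`f_T : ℝ_{≥0}^r → ℝ`, `f_T(m) = min_{α ∈ T} (α₁ m₁ + ⋯ + α_r m_r)`. -/
noncomputable def fT {r : ℕ} (T : Finset (Fin r → ℕ)) (hT : T.Nonempty) :
    Orthant r → ℝ :=
  fun m => T.inf' hT fun α => ∑ i, (α i : ℝ) * m.1 i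

/-- The set of functions `f_T` for `T` a finite nonempty subset of `ℤ_{≥0}^r \ {0}`. -/
def fTSet (r : ℕ) : Set (Orthant r → ℝ) :=
  {f | ∃ (T : Finset (Fin r → ℕ)) (hT : T.Nonempty), (0 : Fin r → ℕ) ∉ T ∧ f = fT T hT}

/-!
The functions `f_T` form an additive semigroup closed under `min`: `f_{A+B} = f_A + f_B` for the
Minkowski sum, because `α ↦ ⟨α, m⟩` is additive, and `f_{A∪B} = min f_A f_B`. In a ℚ-vector space,
every element `x` of the span of an additive semigroup `S` satisfies `n • x = a - b` with `n > 0`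
and `a, b ∈ S`. Applying this to `f - g` gives
`n • min f g = n • g + min (a - b) 0 = n • g + min a b - b`, which lies in the span.
-/

open Pointwise

namespace AddSubsemigroup

variable {M : Type*} [AddCommGroup M] {S : AddSubsemigroup M} {a b : M}

theorem nsmul_mem_of_pos (ha : a ∈ S) {n : ℕ} (hn : 0 < n) : n • a ∈ S := by
  induction n, hn using Nat.le_induction with
  | base => simpa using ha
  | succ n _ ih => simpa [succ_nsmul] using S.add_mem ih ha

theorem exists_zsmul_sub_eq_sub (ha : a ∈ S) (hb : b ∈ S) (z : ℤ) :
    ∃ A ∈ S, ∃ B ∈ S, z • (a - b) = A - B := by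
  -- `z = z.toNat - (-z).toNat`; the `+ 1`s keep both multiples positive, hence in `S`
  refine ⟨(z.toNat + 1) • a + ((-z).toNat + 1) • b,
    S.add_mem (nsmul_mem_of_pos ha z.toNat.succ_pos) (nsmul_mem_of_pos hb (-z).toNat.succ_pos),
    (z.toNat + 1) • b + ((-z).toNat + 1) • a,
    S.add_mem (nsmul_mem_of_pos hb z.toNat.succ_pos) (nsmul_mem_of_pos ha (-z).toNat.succ_pos), ?_⟩
  conv_lhs => rw [← z.toNat_sub_toNat_neg]
  simp only [sub_zsmul, natCast_zsmul, add_nsmul, one_nsmul, nsmul_sub]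
  abel

variable [Module ℚ M]

theorem exists_nsmul_eq_sub_of_mem_span (hS : (S : Set M).Nonempty) {x : M}
    (hx : x ∈ Submodule.span ℚ (S : Set M)) :
    ∃ n : ℕ, 0 < n ∧ ∃ a ∈ S, ∃ b ∈ S, n • x = a - b := by
  induction hx using Submodule.span_induction with
  | mem x hx => exact ⟨1, one_pos, x + x, S.add_mem hx hx, x, hx, by simp⟩
  | zero =>
    obtain ⟨e, he⟩ := hS
    exact ⟨1, one_pos, e, he, e, he, by simp⟩
  | add x y _ _ ihx ihy =>
    obtain ⟨n, hn, a, ha, b, hb, hx⟩ := ihx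
    obtain ⟨k, hk, c, hc, d, hd, hy⟩ := ihy
    refine ⟨n * k, Nat.mul_pos hn hk,
      k • a + n • c, S.add_mem (nsmul_mem_of_pos ha hk) (nsmul_mem_of_pos hc hn),
      k • b + n • d, S.add_mem (nsmul_mem_of_pos hb hk) (nsmul_mem_of_pos hd hn), ?_⟩
    calc (n * k) • (x + y) = k • (n • x) + n • (k • y) := by
          rw [smul_add, mul_nsmul', mul_nsmul', smul_comm n k x]
      _ = _ := by rw [hx, hy, nsmul_sub, nsmul_sub]; abel
  | smul q x _ ih =>
    obtain ⟨n, hn, a, ha, b, hb, hx⟩ := ih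
    obtain ⟨A, hA, B, hB, hAB⟩ := exists_zsmul_sub_eq_sub ha hb q.num
    refine ⟨q.den * n, Nat.mul_pos q.den_pos hn, A, hA, B, hB, ?_⟩
    rw [← hAB, ← hx, ← Nat.cast_smul_eq_nsmul ℚ, ← Nat.cast_smul_eq_nsmul ℚ n,
      ← Int.cast_smul_eq_zsmul ℚ, smul_smul, smul_smul, ← Rat.den_mul_eq_num]
    push_cast
    ring_nf

theorem inf_mem_span {X : Type*} {S : AddSubsemigroup (X → ℝ)} (hS : (S : Set (X → ℝ)).Nonempty)
    (hinf : ∀ a ∈ S, ∀ b ∈ S, a ⊓ b ∈ S) {f g : X → ℝ}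
    (hf : f ∈ Submodule.span ℚ (S : Set (X → ℝ))) (hg : g ∈ Submodule.span ℚ (S : Set (X → ℝ))) :
    f ⊓ g ∈ Submodule.span ℚ (S : Set (X → ℝ)) := by
  obtain ⟨n, hn, a, ha, b, hb, hab⟩ := exists_nsmul_eq_sub_of_mem_span hS (sub_mem hf hg)
  have hsmul_inf : n • (f ⊓ g) = (a ⊓ b - b) + n • g := by
    ext x
    have hx : n * (f x - g x) = a x - b x := by simpa using congrFun hab x
    have hn' : (0 : ℝ) < n := by exact_mod_cast hn
    simp only [Pi.add_apply, Pi.sub_apply, Pi.inf_apply, Pi.smul_apply, nsmul_eq_mul,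
      Pi.mul_apply, Pi.natCast_apply]
    rcases le_total (f x) (g x) with h | h
    · rw [inf_of_le_left h, inf_of_le_left (by nlinarith)]
      linarith
    · rw [inf_of_le_right h, inf_of_le_right (by nlinarith)]
      ring
  have hmem : (n : ℚ) • (f ⊓ g) ∈ Submodule.span ℚ (S : Set (X → ℝ)) := by
    rw [Nat.cast_smul_eq_nsmul, hsmul_inf]
    exact add_mem (sub_mem (Submodule.subset_span (hinf a ha b hb)) (Submodule.subset_span hb))
      (nsmul_mem hg n)
  exact (Submodule.smul_mem_iff _ (by exact_mod_cast hn.ne')).mp hmem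

end AddSubsemigroup

theorem Finset.inf'_add_inf' {α G : Type*} [AddCommMonoid α] [DecidableEq α]
    [AddCommGroup G] [LinearOrder G] [IsOrderedAddMonoid G] (φ : α →+ G)
    {s t : Finset α} (hs : s.Nonempty) (ht : t.Nonempty) :
    (s + t).inf' (hs.add ht) φ = s.inf' hs φ + t.inf' ht φ :=
  calc (s + t).inf' (hs.add ht) φ = s.inf' hs fun a => t.inf' ht fun b => φ a + φ b := by
        simp only [← map_add]
        exact Finset.inf'_image₂_left _ _
    _ = s.inf' hs fun a => φ a + t.inf' ht φ := by
        congr 1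
        funext a
        exact (map_finset_inf' (OrderIso.addLeft (φ a)) ht φ).symm
    _ = s.inf' hs φ + t.inf' ht φ := (map_finset_inf' (OrderIso.addRight _) hs φ).symm

section fT

variable {r : ℕ}

def pairing (m : Fin r → ℝ) : (Fin r → ℕ) →+ ℝ where
  toFun α := ∑ i, (α i : ℝ) * m i
  map_zero' := by simp
  map_add' α β := by simp [add_mul, Finset.sum_add_distrib]

theorem fT_add {A B : Finset (Fin r → ℕ)} (hA : A.Nonempty) (hB : B.Nonempty) :
    fT (A + B) (hA.add hB) = fT A hA + fT B hB :=
  funext fun m => Finset.inf'_add_inf' (pairing m.1) hA hB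

theorem fT_union {A B : Finset (Fin r → ℕ)} (hA : A.Nonempty) (hB : B.Nonempty) :
    fT (A ∪ B) (hA.mono Finset.subset_union_left) = fT A hA ⊓ fT B hB :=
  funext fun _ => Finset.inf'_union hA hB _

def fTAddSubsemigroup (r : ℕ) : AddSubsemigroup (Orthant r → ℝ) where
  carrier := fTSet r
  add_mem' := by
    rintro _ _ ⟨A, hA, hA0, rfl⟩ ⟨B, hB, -, rfl⟩
    refine ⟨A + B, hA.add hB, fun h0 => ?_, (fT_add hA hB).symm⟩
    obtain ⟨α, hα, β, -, hαβ⟩ := Finset.mem_add.mp h0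
    exact hA0 ((add_eq_zero.mp hαβ).1 ▸ hα)

theorem inf_mem_fTSet {f g : Orthant r → ℝ} (hf : f ∈ fTSet r) (hg : g ∈ fTSet r) :
    f ⊓ g ∈ fTSet r := by
  obtain ⟨A, hA, hA0, rfl⟩ := hf
  obtain ⟨B, hB, hB0, rfl⟩ := hg
  refine ⟨A ∪ B, hA.mono Finset.subset_union_left, ?_, (fT_union hA hB).symm⟩
  rw [Finset.mem_union]
  exact fun h0 => h0.elim hA0 hB0

theorem fTSet_nonempty (hr : 0 < r) : (fTSet r).Nonempty :=
  ⟨_, {1}, Finset.singleton_nonempty _,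
    fun h0 => one_ne_zero (congrFun (Finset.mem_singleton.mp h0).symm ⟨0, hr⟩), rfl⟩

end fT

/-- The ℚ-vector space `V` of finite ℚ-linear combinations of the functions `f_T`,
for `T` ranging over finite nonempty subsets of `ℤ_{≥0}^r \ {0}`, is closed under
pointwise minimum. -/
theorem span_fT_min_closed {r : ℕ} (hr : 1 ≤ r)
    (f g : Orthant r → ℝ)
    (hf : f ∈ Submodule.span ℚ (fTSet r))
    (hg : g ∈ Submodule.span ℚ (fTSet r)) :
    (fun m => min (f m) (g m)) ∈ Submodule.span ℚ (fTSet r) :=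
  AddSubsemigroup.inf_mem_span (S := fTAddSubsemigroup r) (fTSet_nonempty hr)
    (fun _ ha _ hb => inf_mem_fTSet ha hb) hf hg
end

section
/- Let (V, E, s, t) be a connected oriented multigraph with V and E finite and V nonempty, and let ∂ : ℝ^E → ℝ^V be its incidence map. Let L : E → ℝ satisfy L(e) > 0 for all e ∈ E, let y, z ∈ V, and let (γ_j)_{j ∈ J} be a basis of the cycle space ker ∂. Then there exists a unique x ∈ ℝ^E such that ∂x = δ_y − δ_z and Σ_{e ∈ E} γ_j(e) · L(e) · x(e) = 0 for every j ∈ J. -/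
/-- The incidence map `∂ : ℝ^E → ℝ^V` of an oriented multigraph `(V, E, s, t)`:
`(∂x)(v) = Σ_{e : t(e)=v} x(e) − Σ_{e : s(e)=v} x(e)`. -/
noncomputable def incidenceMap {V E : Type*} [Fintype E] [DecidableEq V]
    (s t : E → V) : (E → ℝ) →ₗ[ℝ] (V → ℝ) where
  toFun x := fun v =>
    (∑ e ∈ Finset.univ.filter (fun e => t e = v), x e)
      - ∑ e ∈ Finset.univ.filter (fun e => s e = v), x e
  map_add' x y := by
    funext v
    simp [Finset.sum_add_distrib]
    ring
  map_smul' c x := by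
    funext v
    simp [Finset.mul_sum, mul_sub]

/-- The simple graph underlying an oriented multigraph `(V, E, s, t)`: two distinct
vertices `v, w` are adjacent whenever some edge `e` satisfies `{s(e), t(e)} = {v, w}`. -/
def underlyingGraph {V E : Type*} (s t : E → V) : SimpleGraph V where
  Adj v w := v ≠ w ∧ ∃ e, (s e = v ∧ t e = w) ∨ (s e = w ∧ t e = v)
  symm := by
    constructor
    rintro v w ⟨hne, e, he⟩
    exact ⟨hne.symm, e, he.symm⟩
  loopless := by
    constructor
    rintro v ⟨hne, -⟩
    exact hne rfl

/-! The conditions `Σ_e γ_j(e) L(e) x(e) = 0` say that `x` is orthogonal to `span γ = ker ∂` for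
the weighted form `B(u, v) = Σ_e u(e) L(e) v(e)`. Since `L > 0`, `B` is anisotropic, so in finite
dimension `ker ∂` and its `B`-orthogonal complement are complementary subspaces. Connectivity
makes `δ_y − δ_z` a boundary (sum the edges of a path from `y` to `z`), and the unique solution
is the component in that complement of any preimage of `δ_y − δ_z`. -/

open LinearMap (BilinForm ker range)

namespace LinearMap.BilinForm

variable {R K M N : Type*} [CommRing R] [Field K] [AddCommGroup M] [AddCommGroup N]

lemma mem_orthogonal_span_range_iff [Module R M] {ι : Type*} (B : BilinForm R M) (γ : ι → M)
    (x : M) : x ∈ B.orthogonal (Submodule.span R (Set.range γ)) ↔ ∀ j, B (γ j) x = 0 := by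
  change Submodule.span R (Set.range γ) ≤ ker (B.flip x) ↔ _
  rw [Submodule.span_le, Set.range_subset_iff]
  rfl

lemma disjoint_orthogonal_of_anisotropic [Module R M] {B : BilinForm R M}
    (hB : ∀ x, B x x = 0 → x = 0) (W : Submodule R M) : Disjoint W (B.orthogonal W) :=
  Submodule.disjoint_def.mpr fun x hxW hx => hB x (hx x hxW)

theorem existsUnique_eq_and_mem_orthogonal_ker [Module K M] [Module K N] [FiniteDimensional K M]
    {B : BilinForm K M} (hB : B.IsRefl) (hB₀ : ∀ x, B x x = 0 → x = 0) (D : M →ₗ[K] N) {b : N}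
    (hb : b ∈ range D) :
    ∃! x, D x = b ∧ x ∈ B.orthogonal (ker D) := by
  have hcompl : IsCompl (ker D) (B.orthogonal (ker D)) :=
    (isCompl_orthogonal_iff_disjoint hB).mpr (disjoint_orthogonal_of_anisotropic hB₀ _)
  obtain ⟨x₀, rfl⟩ := hb
  obtain ⟨k, hk, x, hx, rfl⟩ :=
    Submodule.mem_sup.mp (hcompl.sup_eq_top ▸ Submodule.mem_top : x₀ ∈ ker D ⊔ _)
  have hDx : D x = D (k + x) := by rw [map_add, LinearMap.mem_ker.mp hk, zero_add]
  refine ⟨x, ⟨hDx, hx⟩, ?_⟩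
  rintro x' ⟨hDx', hx'⟩
  have hdiff : x' - x ∈ ker D ⊓ B.orthogonal (ker D) :=
    Submodule.mem_inf.mpr ⟨by rw [LinearMap.mem_ker, map_sub, hDx', hDx, sub_self], sub_mem hx' hx⟩
  rw [hcompl.inf_eq_bot, Submodule.mem_bot, sub_eq_zero] at hdiff
  exact hdiff

end LinearMap.BilinForm

section WeightedForm

variable {R E : Type*} [CommRing R] [Fintype E]

def weightedForm (L : E → R) : BilinForm R (E → R) :=
  LinearMap.mk₂ R (fun u v => ∑ e, u e * L e * v e)
    (fun u u' v => by simp only [Pi.add_apply, add_mul, Finset.sum_add_distrib])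
    (fun c u v => by simp only [Pi.smul_apply, smul_eq_mul, Finset.mul_sum, mul_assoc])
    (fun u v v' => by simp only [Pi.add_apply, mul_add, Finset.sum_add_distrib])
    (fun c u v => by simp only [Pi.smul_apply, smul_eq_mul, Finset.mul_sum, mul_left_comm])

lemma weightedForm_apply (L : E → R) (u v : E → R) :
    weightedForm L u v = ∑ e, u e * L e * v e :=
  rfl

lemma weightedForm_isRefl (L : E → R) : (weightedForm L).IsRefl := by
  intro u v h
  rw [weightedForm_apply] at h ⊢
  simpa only [mul_comm, mul_left_comm] using h

lemma eq_zero_of_weightedForm_self_eq_zero [LinearOrder R] [IsStrictOrderedRing R] {L : E → R}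
    (hL : ∀ e, 0 < L e) (u : E → R) (hu : weightedForm L u u = 0) : u = 0 := by
  have hterm : ∀ e, 0 ≤ u e * L e * u e := fun e => by
    rw [mul_right_comm]; exact mul_nonneg (mul_self_nonneg _) (hL e).le
  rw [weightedForm_apply, Finset.sum_eq_zero_iff_of_nonneg fun e _ => hterm e] at hu
  funext e
  have := hu e (Finset.mem_univ e)
  rw [mul_right_comm, mul_eq_zero, mul_self_eq_zero] at this
  exact this.resolve_right (hL e).ne'

end WeightedForm

section Incidence

variable {V E : Type*} [Fintype E] [DecidableEq V] (s t : E → V)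

lemma incidenceMap_single [DecidableEq E] (e : E) (c : ℝ) :
    incidenceMap s t (Pi.single e c) = Pi.single (t e) c - Pi.single (s e) c := by
  ext v
  simp [incidenceMap, Pi.single_apply, eq_comm]

lemma single_sub_single_mem_range_incidenceMap_of_adj {v w : V}
    (h : (underlyingGraph s t).Adj v w) :
    Pi.single v 1 - Pi.single w 1 ∈ range (incidenceMap s t) := by
  classical
  obtain ⟨-, e, ⟨rfl, rfl⟩ | ⟨rfl, rfl⟩⟩ := h
  · rw [← neg_sub, ← incidenceMap_single]
    exact neg_mem (LinearMap.mem_range_self _ _)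
  · rw [← incidenceMap_single]
    exact LinearMap.mem_range_self _ _

lemma single_sub_single_mem_range_incidenceMap_of_reachable {v w : V}
    (h : (underlyingGraph s t).Reachable v w) :
    Pi.single v 1 - Pi.single w 1 ∈ range (incidenceMap s t) := by
  obtain ⟨p⟩ := h
  induction p with
  | nil => simp
  | cons hadj _ ih =>
    simpa using add_mem (single_sub_single_mem_range_incidenceMap_of_adj s t hadj) ih

end Incidence

theorem current_flow_exists_unique_general {V E : Type*} [Fintype E]
    [DecidableEq V]
    (s t : E → V) (hconn : (underlyingGraph s t).Connected)
    (L : E → ℝ) (hL : ∀ e, 0 < L e)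
    (y z : V) {J : Type*} (γ : J → (E → ℝ))
    (hspan : Submodule.span ℝ (Set.range γ) = LinearMap.ker (incidenceMap s t)) :
    ∃! x : E → ℝ,
      incidenceMap s t x
          = (fun v => (if v = y then (1 : ℝ) else 0) - (if v = z then (1 : ℝ) else 0))
        ∧ ∀ j, ∑ e, γ j e * L e * x e = 0 := by
  have hdipole : (fun v => (if v = y then (1 : ℝ) else 0) - (if v = z then (1 : ℝ) else 0))
      = Pi.single y 1 - Pi.single z 1 := by
    ext v
    simp [Pi.single_apply]
  simp_rw [← weightedForm_apply, ← BilinForm.mem_orthogonal_span_range_iff, hspan, hdipole]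
  exact BilinForm.existsUnique_eq_and_mem_orthogonal_ker (weightedForm_isRefl L)
    (eq_zero_of_weightedForm_self_eq_zero hL) _
    (single_sub_single_mem_range_incidenceMap_of_reachable s t (hconn.preconnected y z))

/-- **Existence and uniqueness of the current flow.**
Let `(V, E, s, t)` be a connected finite oriented multigraph, `L : E → ℝ` positive
edge lengths, `y, z ∈ V`, and `(γ_j)` a basis of the cycle space `ker ∂`. Then there
is a unique `x ∈ ℝ^E` with `∂x = δ_y − δ_z` and `Σ_e γ_j(e) L(e) x(e) = 0` for all `j`. -/
theorem current_flow_exists_unique {V E : Type*} [Fintype V] [Fintype E]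
    [DecidableEq V] [Nonempty V]
    (s t : E → V) (hconn : (underlyingGraph s t).Connected)
    (L : E → ℝ) (hL : ∀ e, 0 < L e)
    (y z : V) {J : Type*} (γ : J → (E → ℝ))
    (hker : ∀ j, incidenceMap s t (γ j) = 0)
    (hli : LinearIndependent ℝ γ)
    (hspan : Submodule.span ℝ (Set.range γ) = LinearMap.ker (incidenceMap s t)) :
    ∃! x : E → ℝ,
      incidenceMap s t x
          = (fun v => (if v = y then (1 : ℝ) else 0) - (if v = z then (1 : ℝ) else 0))
        ∧ ∀ j, ∑ e, γ j e * L e * x e = 0 :=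
  current_flow_exists_unique_general s t hconn L hL y z γ hspan
end
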